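/- Let p be an odd prime, n ≥ 1, and e_1 ≤ ... ≤ e_n positive integers. Let P = ⊕_{i=1}^n Z/p^{e_i}Z. Then the Reidemeister spectrum of P equals {p^m : 0 ≤ m ≤ e_1 + ... + e_n}. -/

import Mathlib

/-- The Reidemeister number of an (additive) endomorphism `φ`: the number of
`φ`-twisted conjugacy classes, where `x` and `y` are `φ`-conjugate iff
`x = z + y - φ z` for some `z`. -/
noncomputable def twistedClasses {A : Type*} [AddCommGroup A] (φ : A →+ A) : ℕ :=
  Nat.card (Quot (fun x y : A => ∃ z : A, x = z + y - φ z))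

/-- The Reidemeister spectrum: the set of Reidemeister numbers of automorphisms. -/
noncomputable def reidSpec (A : Type*) [AddCommGroup A] : Set ℕ :=
  {r | ∃ φ : A ≃+ A, twistedClasses φ.toAddMonoidHom = r}

/-! The `φ`-twisted classes of an abelian group `A` are the cosets of the image of `id - φ`, so
for finite `A` their number is `|A| / |im (id - φ)| = |ker (id - φ)| = |Fix φ|`, a divisor of
`|A| = p ^ ∑ eᵢ`. Conversely, given `kᵢ ≤ eᵢ`, multiplying the `i`-th factor by `1 + p ^ kᵢ`
(a unit since `p` is odd, also when `kᵢ = 0`) fixes exactly `∏ p ^ kᵢ` elements, and `∑ kᵢ`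
can be chosen to be any number up to `∑ eᵢ`. -/

open Function

section Reidemeister

variable {A : Type*} [AddCommGroup A]

theorem twistedClasses_eq_index (φ : A →+ A) :
    twistedClasses φ = (AddMonoidHom.id A - φ).range.index := by
  refine Nat.card_congr (Quot.congrRight fun x y => ?_)
  rw [QuotientAddGroup.leftRel_apply]
  constructor
  · rintro ⟨z, rfl⟩
    exact ⟨-z, by
      simp only [AddMonoidHom.sub_apply, AddMonoidHom.id_apply, map_neg]; abel⟩
  · rintro ⟨z, hz⟩
    refine ⟨-z, ?_⟩
    simp only [AddMonoidHom.sub_apply, AddMonoidHom.id_apply] at hz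
    simp only [map_neg]
    linear_combination (norm := abel) hz

theorem twistedClasses_dvd_card (φ : A →+ A) : twistedClasses φ ∣ Nat.card A :=
  twistedClasses_eq_index φ ▸ AddSubgroup.index_dvd_card _

theorem twistedClasses_eq_card_fixedPoints [Finite A] (φ : A →+ A) :
    twistedClasses φ = Nat.card (fixedPoints φ) := by
  rw [twistedClasses_eq_index, AddSubgroup.index_range]
  congr
  ext x
  simp [IsFixedPt, sub_eq_zero, eq_comm (a := φ x)]

end Reidemeister

theorem card_fixedPoints_piCongrRight {ι : Type*} [Fintype ι] {A : ι → Type*}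
    [∀ i, AddCommGroup (A i)] (f : ∀ i, A i ≃+ A i) :
    Nat.card (fixedPoints (AddEquiv.piCongrRight f)) = ∏ i, Nat.card (fixedPoints (f i)) := by
  rw [← Nat.card_pi]
  exact Nat.card_congr <| (Equiv.subtypeEquivRight fun x => funext_iff).trans
    (Equiv.subtypePiEquivPi (p := fun i a => f i a = a))

theorem ZMod.card_fixedPoints_mulRight {N c : ℕ} [NeZero N] (hc : c ∣ N) {u : (ZMod N)ˣ}
    (hu : (u : ZMod N) = 1 + c) : Nat.card (fixedPoints (AddAut.mulRight u)) = c := by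
  have : fixedPoints (AddAut.mulRight u) = (nsmulAddMonoidHom c : ZMod N →+ ZMod N).ker := by
    ext x
    simp only [mem_fixedPoints, IsFixedPt, AddAut.mulRight_apply, hu, mul_add, mul_one,
      add_eq_left, SetLike.mem_coe, AddMonoidHom.mem_ker, nsmulAddMonoidHom_apply, nsmul_eq_mul]
    rw [mul_comm]
  rw [this, SetLike.coe_sort_coe, IsAddCyclic.card_nsmulAddMonoidHom_ker, Nat.card_zmod,
    Nat.gcd_eq_right hc]

theorem Nat.Prime.coprime_one_add_pow {p : ℕ} (hp : p.Prime) (hodd : Odd p) (k : ℕ) :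
    (1 + p ^ k).Coprime p := by
  rw [Nat.coprime_comm, hp.coprime_iff_not_dvd]
  intro hdvd
  rcases k.eq_zero_or_pos with rfl | hk
  · have h2 : p ≤ 2 := Nat.le_of_dvd two_pos (by simpa using hdvd)
    have := hp.two_le
    rcases hodd with ⟨j, rfl⟩
    omega
  · exact hp.not_dvd_one ((Nat.dvd_add_left (dvd_pow_self p hk.ne')).1 hdvd)

theorem exists_le_sum_eq {ι : Type*} [Fintype ι] {e : ι → ℕ} {m : ℕ}
    (hm : m ≤ ∑ i, e i) : ∃ k ≤ e, ∑ i, k i = m := by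
  classical
  induction m with
  | zero => exact ⟨0, fun i => Nat.zero_le _, by simp⟩
  | succ m ih =>
    obtain ⟨k, hke, rfl⟩ := ih (by omega)
    obtain ⟨i, -, hi⟩ :=
      Finset.exists_lt_of_sum_lt (s := Finset.univ) (by omega : ∑ i, k i < ∑ i, e i)
    refine ⟨k + Pi.single i 1, fun j => ?_, ?_⟩
    · rcases eq_or_ne j i with rfl | hj
      · simpa using hi
      · simpa [hj] using hke j
    · simp [Finset.sum_add_distrib]

theorem stmt_6_general (p n : ℕ) (hp : p.Prime) (hodd : Odd p) (e : Fin n → ℕ) :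
    reidSpec (∀ i : Fin n, ZMod (p ^ e i)) =
      {r | ∃ m, m ≤ ∑ i, e i ∧ r = p ^ m} := by
  have (i : Fin n) : NeZero (p ^ e i) := ⟨pow_ne_zero _ hp.ne_zero⟩
  ext r
  constructor
  · rintro ⟨φ, rfl⟩
    have hcard : Nat.card (∀ i : Fin n, ZMod (p ^ e i)) = p ^ ∑ i, e i := by
      simp [Finset.prod_pow_eq_pow_sum]
    exact (Nat.dvd_prime_pow hp).1 (hcard ▸ twistedClasses_dvd_card _)
  · rintro ⟨m, hm, rfl⟩
    obtain ⟨k, hke, rfl⟩ := exists_le_sum_eq hm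
    let u (i : Fin n) : (ZMod (p ^ e i))ˣ :=
      ZMod.unitOfCoprime _ ((hp.coprime_one_add_pow hodd (k i)).pow_right (e i))
    refine ⟨AddEquiv.piCongrRight fun i => AddAut.mulRight (u i), ?_⟩
    rw [twistedClasses_eq_card_fixedPoints, AddEquiv.coe_toAddMonoidHom,
      card_fixedPoints_piCongrRight, ← Finset.prod_pow_eq_pow_sum]
    refine Finset.prod_congr rfl fun i _ => ZMod.card_fixedPoints_mulRight ?_ ?_
    · exact pow_dvd_pow p (hke i)
    · simp [u]

theorem stmt_6 (p n : ℕ) (hp : p.Prime) (hodd : Odd p) (hn : 1 ≤ n)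
    (e : Fin n → ℕ) (he : Monotone e) (he1 : ∀ i, 1 ≤ e i) :
    reidSpec (∀ i : Fin n, ZMod (p ^ e i)) =
      {r | ∃ m, m ≤ ∑ i, e i ∧ r = p ^ m} :=
  stmt_6_general p n hp hodd e
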